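/- Let 𝔉=(X,R) be a frame, 𝔊=(Y,S) an image-finite frame, x∈X, y∈Y and k ≥ 1. Then ¬𝒥^k(𝔊,y) fails to be valid at x in 𝔉 if and only if there exists a k-t-morphism from (𝔉,x) to (𝔊,y). -/
import Mathlib


/-! ## Syntax of tense logic -/

inductive TForm : Type
  | var : ℕ → TForm
  | bot : TForm
  | imp : TForm → TForm → TForm
  | box : TForm → TForm
  | bdia : TForm → TForm
  deriving DecidableEq

namespace TForm

def neg (φ : TForm) : TForm := imp φ bot

def top : TForm := neg bot

def orf (φ ψ : TForm) : TForm := imp (neg φ) ψ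

def andf (φ ψ : TForm) : TForm := neg (imp φ (neg ψ))

def dia (φ : TForm) : TForm := neg (box (neg φ))

def bbox (φ : TForm) : TForm := neg (bdia (neg φ))

def subst (s : ℕ → TForm) : TForm → TForm
  | var n => s n
  | bot => bot
  | imp φ ψ => imp (subst s φ) (subst s ψ)
  | box φ => box (subst s φ)
  | bdia φ => bdia (subst s φ)

/-- Modal degree of a formula. -/
def mdeg : TForm → ℕ
  | var _ => 0
  | bot => 0
  | imp φ ψ => max (mdeg φ) (mdeg ψ)
  | box φ => mdeg φ + 1
  | bdia φ => mdeg φ + 1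

end TForm

open TForm

/-! ## Frames and relational notions -/

/-- `R[U] = {z : ∃ y ∈ U, R y z}`. -/
def Rimg {X : Type*} (R : X → X → Prop) (U : Set X) : Set X := {z | ∃ y ∈ U, R y z}

/-- `R[x]`, the set of `R`-successors of `x`. -/
def rsucc {X : Type*} (R : X → X → Prop) (x : X) : Set X := {y | R x y}

/-- `R̆[x]`, the set of `R`-predecessors of `x`. -/
def rpred {X : Type*} (R : X → X → Prop) (x : X) : Set X := {y | R y x}

/-- `R_♯^k[x]`. -/
def rsharp {X : Type*} (R : X → X → Prop) : ℕ → X → Set X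
  | 0, x => {x}
  | k+1, x => rsharp R k x ∪ Rimg R (rsharp R k x) ∪ Rimg (flip R) (rsharp R k x)

/-- `R_♯^ω[x]`. -/
def rsharpOmega {X : Type*} (R : X → X → Prop) (x : X) : Set X := ⋃ k : ℕ, rsharp R k x

/-- A frame is rooted if it is generated by a single point under `R` and its converse. -/
def Rooted {X : Type*} (R : X → X → Prop) : Prop := ∃ x : X, ∀ y : X, y ∈ rsharpOmega R x

/-- A frame is image-finite if `R_♯^1[x]` is finite for every `x`. -/
def ImageFinite {X : Type*} (R : X → X → Prop) : Prop := ∀ x : X, (rsharp R 1 x).Finite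

/-! ## Semantics -/

def TSat {X : Type*} (R : X → X → Prop) (V : ℕ → Set X) : TForm → Set X
  | .var n => V n
  | .bot => ∅
  | .imp φ ψ => (TSat R V φ)ᶜ ∪ TSat R V ψ
  | .box φ => {x | ∀ y, R x y → y ∈ TSat R V φ}
  | .bdia φ => {x | ∃ y, R y x ∧ y ∈ TSat R V φ}

/-- `φ` is valid at the point `x` of the frame `(X,R)`. -/
def ValidAt {X : Type*} (R : X → X → Prop) (x : X) (φ : TForm) : Prop :=
  ∀ V : ℕ → Set X, x ∈ TSat R V φ

/-- `φ` is valid in the frame `(X,R)`. -/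
def Valid {X : Type*} (R : X → X → Prop) (φ : TForm) : Prop :=
  ∀ (V : ℕ → Set X) (x : X), x ∈ TSat R V φ

/-- The tense logic of a frame. -/
def FrameLog {X : Type*} (R : X → X → Prop) : Set TForm := {φ | Valid R φ}

/-! ## Tense logics -/

/-- `φ` is a substitution instance of a classical propositional tautology. -/
def IsTautInstance (φ : TForm) : Prop :=
  ∀ v : TForm → Prop, ¬ v .bot → (∀ ψ χ, v (.imp ψ χ) ↔ (v ψ → v χ)) → v φ

/-- A (normal) tense logic. -/
structure TenseLogic (L : Set TForm) : Prop where
  taut_mem : ∀ φ, IsTautInstance φ → φ ∈ L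
  adjoint : ∀ φ ψ : TForm, TForm.imp (.bdia φ) ψ ∈ L ↔ TForm.imp φ (.box ψ) ∈ L
  mp : ∀ φ ψ : TForm, TForm.imp φ ψ ∈ L → φ ∈ L → ψ ∈ L
  subst_mem : ∀ φ ∈ L, ∀ s : ℕ → TForm, TForm.subst s φ ∈ L

def Consistent (L : Set TForm) : Prop := TForm.bot ∉ L

/-- A logic is tabular if it is the logic of some finite (nonempty) frame. -/
def Tabular (L : Set TForm) : Prop :=
  ∃ (X : Type) (_ : Finite X) (_ : Nonempty X) (R : X → X → Prop), L = FrameLog R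

/-- A logic is pretabular if it is not tabular while every proper consistent
tense-logic extension of it is tabular. -/
def Pretabular (L : Set TForm) : Prop :=
  ¬ Tabular L ∧
    ∀ L' : Set TForm, TenseLogic L' → L ⊆ L' → L ≠ L' → Consistent L' → Tabular L'

/-- The set of pretabular tense logics extending `L0`. -/
def PTAB (L0 : Set TForm) : Set (Set TForm) :=
  {L | TenseLogic L ∧ L0 ⊆ L ∧ Pretabular L}

/-! ## Some formulas -/

def bigConj : List TForm → TForm
  | [] => TForm.top
  | φ :: l => andf φ (bigConj l)

def bigDisj : List TForm → TForm
  | [] => TForm.bot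
  | φ :: l => orf φ (bigDisj l)

/-- `Δ^k φ`. -/
def tdelta : ℕ → TForm → TForm
  | 0, φ => φ
  | k+1, φ => orf (tdelta k φ) (orf (dia (tdelta k φ)) (TForm.bdia (tdelta k φ)))

/-- `∇^k φ = ¬Δ^k¬φ`. -/
def tnabla (k : ℕ) (φ : TForm) : TForm := neg (tdelta k (neg φ))

/-- `ψ_i = ¬p_0 ∧ ⋯ ∧ ¬p_{i-1} ∧ p_i`. -/
def tpsi (i : ℕ) : TForm :=
  bigConj (((List.range i).map fun j => neg (var j)) ++ [var i])

/-- `tab^T_n = ¬(Δ^n ψ_0 ∧ ⋯ ∧ Δ^n ψ_n)`. -/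
def tabT (n : ℕ) : TForm :=
  neg (bigConj ((List.range (n+1)).map fun i => tdelta n (tpsi i)))

/-! ## General frames -/

structure IsGeneralFrame {X : Type*} (R : X → X → Prop) (A : Set (Set X)) : Prop where
  empty_mem : ∅ ∈ A
  inter_mem : ∀ U ∈ A, ∀ V ∈ A, U ∩ V ∈ A
  compl_mem : ∀ U ∈ A, Uᶜ ∈ A
  fimg_mem : ∀ U ∈ A, Rimg R U ∈ A
  bimg_mem : ∀ U ∈ A, Rimg (flip R) U ∈ A

def Differentiated {X : Type*} (A : Set (Set X)) : Prop :=
  ∀ x y : X, x ≠ y → ∃ U ∈ A, x ∈ U ∧ y ∉ U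

def Tight {X : Type*} (R : X → X → Prop) (A : Set (Set X)) : Prop :=
  ∀ x y : X, ¬ R x y →
    ∃ U ∈ A, ∃ V ∈ A, (x ∈ U ∧ x ∉ Rimg (flip R) V) ∧ (y ∈ V ∧ y ∉ Rimg R U)

/-- Validity in a general frame: truth at all points under all valuations into `A`. -/
def GValid {X : Type*} (R : X → X → Prop) (A : Set (Set X)) (φ : TForm) : Prop :=
  ∀ V : ℕ → Set X, (∀ n, V n ∈ A) → ∀ x, x ∈ TSat R V φ

/-- Validity at a point of a general frame. -/
def GValidAt {X : Type*} (R : X → X → Prop) (A : Set (Set X)) (x : X) (φ : TForm) : Prop :=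
  ∀ V : ℕ → Set X, (∀ n, V n ∈ A) → x ∈ TSat R V φ

/-! ## (Local) t-morphisms -/

/-- Domain of a partial function. -/
def pdom {X Y : Type*} (f : X → Option Y) : Set X := {x | (f x).isSome}

/-- Image of a set under a partial function. -/
def pimg {X Y : Type*} (f : X → Option Y) (S : Set X) : Set Y := {y | ∃ x ∈ S, f x = some y}

/-- Range of a partial function. -/
def pran {X Y : Type*} (f : X → Option Y) : Set Y := {y | ∃ x, f x = some y}

/-- `f` is a `k`-t-morphism from `((X,R),x)` to `((Y,S),y)`. -/
def IsKTMorphism {X Y : Type*} (R : X → X → Prop) (S : Y → Y → Prop)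
    (f : X → Option Y) (x : X) (y : Y) (k : ℕ) : Prop :=
  rsharp R k x ⊆ pdom f ∧ f x = some y ∧
    ∀ z ∈ rsharp R (k-1) x, ∀ z' : Y, f z = some z' →
      pimg f (rsucc R z) = rsucc S z' ∧ pimg f (rpred R z) = rpred S z'

/-- A (total) t-morphism between frames. -/
def IsTMorphism {X Y : Type*} (R : X → X → Prop) (S : Y → Y → Prop) (f : X → Y) : Prop :=
  ∀ x : X, f '' rsucc R x = rsucc S (f x) ∧ f '' rpred R x = rpred S (f x)

/-! ## Generalized Jankov formulas -/

def finPairs (n : ℕ) : List (Fin n × Fin n) :=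
  (List.finRange n).flatMap fun i => (List.finRange n).map fun j => (i, j)

open Classical in
/-- The generalized Jankov formula `𝒥^k(𝔊,y)`, relative to an enumeration
`e : Fin n → Y` of `S_♯^k[y]` with `e 0 = y`. -/
noncomputable def jankov {Y : Type*} (S : Y → Y → Prop) (k n : ℕ) (e : Fin n → Y) : TForm :=
  andf (andf (TForm.var 0) (tnabla k (bigDisj ((List.finRange n).map fun i => TForm.var i.val))))
    (andf
      (bigConj (((finPairs n).filter fun p => decide (p.1 ≠ p.2)).map fun p =>
        tnabla k (TForm.imp (.var p.1.val) (neg (.var p.2.val)))))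
      (andf
        (bigConj (((finPairs n).filter fun p => decide (S (e p.1) (e p.2))).map fun p =>
          tnabla (k-1) (andf (TForm.imp (.var p.1.val) (dia (.var p.2.val)))
            (TForm.imp (.var p.2.val) (.bdia (.var p.1.val))))))
        (bigConj (((finPairs n).filter fun p => decide (¬ S (e p.1) (e p.2))).map fun p =>
          tnabla (k-1) (andf (TForm.imp (.var p.1.val) (neg (dia (.var p.2.val))))
            (TForm.imp (.var p.2.val) (neg (.bdia (.var p.1.val)))))))))

/-! ## Bounded-parameter formulas -/

/-- `bz_n = Δ^{n+1}p → Δ^n p`. -/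
def bz (n : ℕ) : TForm := TForm.imp (tdelta (n+1) (var 0)) (tdelta n (var 0))

def offDiag (n : ℕ) : List (Fin n × Fin n) :=
  (finPairs n).filter fun p => decide (p.1 ≠ p.2)

/-- `bw^+_n`. -/
def bwp (n : ℕ) : TForm :=
  TForm.imp (bigConj ((List.finRange (n+1)).map fun i => dia (var i.val)))
    (bigDisj ((offDiag (n+1)).map fun p =>
      dia (andf (var p.1.val) (orf (var p.2.val) (dia (var p.2.val))))))

/-- `bw^-_n`. -/
def bwm (n : ℕ) : TForm :=
  TForm.imp (bigConj ((List.finRange (n+1)).map fun i => TForm.bdia (var i.val)))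
    (bigDisj ((offDiag (n+1)).map fun p =>
      TForm.bdia (andf (var p.1.val) (orf (var p.2.val) (TForm.bdia (var p.2.val))))))

/-- `bd_n` (with `bd_0 := ⊤`, unused). -/
def bd : ℕ → TForm
  | 0 => TForm.top
  | 1 => TForm.imp (dia (box (var 0))) (var 0)
  | k+2 => TForm.imp (dia (andf (box (var (k+1))) (neg (bd (k+1))))) (var (k+1))

/-- Every strict chain inside `R[x]` has length at most `n` (`dep(x) ≤ n`). -/
def depLe {X : Type*} (R : X → X → Prop) (x : X) (n : ℕ) : Prop :=
  ∀ (m : ℕ) (c : Fin m → X), (∀ i, R x (c i)) →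
    (∀ i j : Fin m, i < j → R (c i) (c j) ∧ ¬ R (c j) (c i)) → m ≤ n

/-- Every antichain inside `R[x]` has size at most `n` (`wid^+(x) ≤ n`). -/
def widPlusLe {X : Type*} (R : X → X → Prop) (x : X) (n : ℕ) : Prop :=
  ∀ (m : ℕ) (c : Fin m → X), Function.Injective c → (∀ i, R x (c i)) →
    (∀ i j : Fin m, i ≠ j → ¬ R (c i) (c j)) → m ≤ n

/-- `wid^-(x) ≤ n`. -/
def widMinusLe {X : Type*} (R : X → X → Prop) (x : X) (n : ℕ) : Prop :=
  widPlusLe (flip R) x n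

/-- `zdg(x) ≤ n`. -/
def zdgLe {X : Type*} (R : X → X → Prop) (x : X) (n : ℕ) : Prop :=
  rsharp R n x = rsharpOmega R x

/-! ## Axiomatically presented logics -/

/-- The least tense logic containing `Γ` (i.e. `K_t ⊕ Γ`). -/
def TLogicGen (Γ : Set TForm) : Set TForm := ⋂₀ {L : Set TForm | TenseLogic L ∧ Γ ⊆ L}

def axT : TForm := TForm.imp (box (var 0)) (var 0)

def ax4 : TForm := TForm.imp (box (var 0)) (box (box (var 0)))

/-- `S4_t`. -/
def S4t : Set TForm := TLogicGen {axT, ax4}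

/-- `S4BP^{k,l}_{n,m}` with all parameters finite. -/
def S4BPfin (k l n m : ℕ) : Set TForm := TLogicGen {axT, ax4, bd k, bz l, bwp n, bwm m}

/-- `S4BP^{k,ω}_{n,m}` (no bound on z-degree: `bz_ω = ⊤`). -/
def S4BPko (k n m : ℕ) : Set TForm := TLogicGen {axT, ax4, bd k, bwp n, bwm m}

/-- `S4.3_t = S4BP^{ω,1}_{1,1}`. -/
def S43t : Set TForm := TLogicGen {axT, ax4, bz 1, bwp 1, bwm 1}

/-- `S4BP^{2,ω}_{2,2}`. -/
def S4BP2w22 : Set TForm := TLogicGen {axT, ax4, bd 2, bwp 2, bwm 2}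

/-- `S4BP^{2,ω}_{2,3}`. -/
def S4BP2w23 : Set TForm := TLogicGen {axT, ax4, bd 2, bwp 2, bwm 3}

/-- `S5_t = S4_t ⊕ (◇p → □◇p)`. -/
def S5t : Set TForm := TLogicGen {axT, ax4, TForm.imp (dia (var 0)) (box (dia (var 0)))}

/-- Kripke completeness: `L` is the logic of the class of Kripke frames validating `L`. -/
def KripkeComplete (L : Set TForm) : Prop :=
  L = {φ | ∀ (X : Type) (R : X → X → Prop), Nonempty X → (∀ ψ ∈ L, Valid R ψ) → Valid R φ}

/-- The finite model property: `L` is the logic of the class of finite frames validating `L`. -/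
def HasFMP (L : Set TForm) : Prop :=
  L = {φ | ∀ (X : Type) (R : X → X → Prop), Finite X → Nonempty X →
        (∀ ψ ∈ L, Valid R ψ) → Valid R φ}

/-! ## Skeletons and pre-skeletons -/

/-- A skeleton: a preorder frame all of whose clusters are singletons. -/
def IsSkeleton {X : Type*} (R : X → X → Prop) : Prop :=
  Reflexive R ∧ Transitive R ∧ ∀ y z : X, R y z → R z y → y = z

/-- Membership in the blown-up cluster `C^x_λ = {x} ∪ N`. -/
def inCl {X N : Type*} (x : X) : X ⊕ N → Prop
  | .inl u => u = x
  | .inr _ => True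

/-- The relation of the pre-skeleton `𝔉^x_λ`, where the fresh points are indexed by `N`:
`R ∪ (C^x_λ × R[x]) ∪ (R̆[x] × C^x_λ) ∪ (C^x_λ × C^x_λ)`. -/
def preRel {X : Type*} (N : Type*) (R : X → X → Prop) (x : X) : X ⊕ N → X ⊕ N → Prop :=
  fun a b =>
    (∃ u v, a = Sum.inl u ∧ b = Sum.inl v ∧ R u v) ∨
    (inCl x a ∧ ∃ v, b = Sum.inl v ∧ R x v) ∨
    (inCl x b ∧ ∃ u, a = Sum.inl u ∧ R u x) ∨
    (inCl x a ∧ inCl x b)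

/-- c-irreducibility of the pre-skeleton `𝔉^x_1`: every t-morphic image of `𝔉^x_1` is
isomorphic to `𝔉^x_1` or is a t-morphic image of `𝔉`. -/
def CIrrOne {X : Type} (R : X → X → Prop) (x : X) : Prop :=
  ∀ (Y : Type) (S : Y → Y → Prop),
    (∃ f : X ⊕ Fin 1 → Y, Function.Surjective f ∧ IsTMorphism (preRel (Fin 1) R x) S f) →
    ((∃ g : X ⊕ Fin 1 → Y, Function.Bijective g ∧ IsTMorphism (preRel (Fin 1) R x) S g) ∨
     (∃ h : X → Y, Function.Surjective h ∧ IsTMorphism R S h))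

/-- c-irreducibility of the pre-skeleton `𝔉^x_ω`: every t-morphic image of `𝔉^x_ω` is
isomorphic to `𝔉^x_m` for some `0 < m ≤ ω` or is a t-morphic image of `𝔉`. -/
def CIrrOmega {X : Type} (R : X → X → Prop) (x : X) : Prop :=
  ∀ (Y : Type) (S : Y → Y → Prop),
    (∃ f : X ⊕ ℕ → Y, Function.Surjective f ∧ IsTMorphism (preRel ℕ R x) S f) →
    ((∃ m : ℕ, 0 < m ∧ ∃ g : X ⊕ Fin m → Y, Function.Bijective g ∧
        IsTMorphism (preRel (Fin m) R x) S g) ∨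
     (∃ g : X ⊕ ℕ → Y, Function.Bijective g ∧ IsTMorphism (preRel ℕ R x) S g) ∨
     (∃ h : X → Y, Function.Surjective h ∧ IsTMorphism R S h))

/-! ## Chains, garlands -/

/-- The chain `𝔠_n = ({0,…,n-1}, ≥)`. -/
def chainR (n : ℕ) : Fin n → Fin n → Prop := fun i j => j ≤ i

/-- `L^↑ = ⋂_{n ≥ 1} Log(𝔠_n)`, the tense logic of all finite chains. -/
def Lup : Set TForm := ⋂ n : ℕ, FrameLog (chainR (n+1))

def Lcirc : Set TForm := FrameLog (preRel ℕ (chainR 1) (0 : Fin 1))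

def Lplus : Set TForm := FrameLog (preRel ℕ (chainR 2) (1 : Fin 2))

def Lminus : Set TForm := FrameLog (preRel ℕ (chainR 2) (0 : Fin 2))

def Lpm : Set TForm := FrameLog (preRel ℕ (chainR 3) (1 : Fin 3))

/-- The frame `𝔊_ℤ`. -/
def Rz : ℤ → ℤ → Prop := fun i j => i = j ∨ (Odd i ∧ (j = i - 1 ∨ j = i + 1))

/-- `Ga = Log(𝔊_ℤ)`. -/
def Ga : Set TForm := FrameLog Rz

/-- The garland `𝔊_n` on `{0,…,n}`. -/
def garR (n : ℕ) : Fin (n+1) → Fin (n+1) → Prop :=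
  fun i j => i = j ∨ (Odd (i : ℕ) ∧ ((j : ℕ) + 1 = (i : ℕ) ∨ (j : ℕ) = (i : ℕ) + 1))

/-! ## Generalized Thue–Morse sequences -/

/-- Endpoints `(lo, hi)` of the domain of the stage-`k` approximation `χ^f_k`. -/
def tmBnd : ℕ → ℤ × ℤ
  | 0 => (0, 2)
  | k+1 =>
      let ab := tmBnd k
      if k % 2 = 0 then (ab.1, ab.2 + (ab.2 - ab.1 + 1) + 1)
      else (ab.1 - (ab.2 - ab.1 + 1) - 1, ab.2)

/-- Value of the stage-`k` approximation `χ^f_k` (junk outside its domain). -/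
def tmVal (f : ℕ → Bool) : ℕ → ℤ → Bool
  | 0, j => decide (j = 2)
  | k+1, j =>
      let a := (tmBnd k).1
      let b := (tmBnd k).2
      if k % 2 = 0 then
        if j ≤ b then tmVal f k j
        else if j = b + 1 then f k
        else ! tmVal f k (j - (b + 2) + a)
      else
        if a ≤ j then tmVal f k j
        else if j = a - 1 then f k
        else ! tmVal f k (j + (b - a + 1) + 1)

/-- The generalized Thue–Morse sequence `χ^f : ℤ → Bool` generated by `f`
(evaluated at a stage whose domain certainly contains the argument). -/
def chi (f : ℕ → Bool) : ℤ → Bool := fun j => tmVal f (2 * j.natAbs + 2) j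

/-- `α` is finitely perfect: for every finite subsequence `β = α↾[c,d]` there is `n ∈ ω`
such that `β` embeds into every finite subsequence `ζ = α↾[c',d']` with `|dom ζ| > n`. -/
def FinitelyPerfect (α : ℤ → Bool) : Prop :=
  ∀ c d : ℤ, ∃ n : ℕ, ∀ c' d' : ℤ, (n : ℤ) < d' - c' + 1 →
    ∃ s : ℤ, c' ≤ c + s ∧ d + s ≤ d' ∧ ∀ j : ℤ, c ≤ j → j ≤ d → α j = α (j + s)

/-! ### Auxiliary lemmas for Statement 3 -/

section Aux

variable {X : Type} (R : X → X → Prop)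

lemma self_mem_rsharp (m : ℕ) (x : X) : x ∈ rsharp R m x := by
  induction m with
  | zero => exact rfl
  | succ m ih => exact Or.inl (Or.inl ih)

lemma rsharp_succ_subset (m : ℕ) (x : X) : rsharp R m x ⊆ rsharp R (m+1) x :=
  fun _ h => Or.inl (Or.inl h)

lemma rsharp_mono {m m' : ℕ} (h : m ≤ m') (x : X) : rsharp R m x ⊆ rsharp R m' x := by
  induction h with
  | refl => exact fun _ h => h
  | step _ ih => exact fun z hz => rsharp_succ_subset R _ x (ih hz)

lemma mem_rsharp_succ_of_r {m : ℕ} {x z w : X} (hz : z ∈ rsharp R m x) (hr : R z w) :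
    w ∈ rsharp R (m+1) x := Or.inl (Or.inr ⟨z, hz, hr⟩)

lemma mem_rsharp_succ_of_rrev {m : ℕ} {x z w : X} (hz : z ∈ rsharp R m x) (hr : R w z) :
    w ∈ rsharp R (m+1) x := Or.inr ⟨z, hz, hr⟩

lemma mem_rsharp_succ_iff {m : ℕ} {z w : X} :
    w ∈ rsharp R (m+1) z ↔ w ∈ rsharp R m z ∨ (∃ u, u ∈ rsharp R m z ∧ R u w) ∨
      (∃ u, u ∈ rsharp R m z ∧ R w u) := by
  constructor
  · rintro ((h | ⟨u, hu, hr⟩) | ⟨u, hu, hr⟩)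
    · exact Or.inl h
    · exact Or.inr (Or.inl ⟨u, hu, hr⟩)
    · exact Or.inr (Or.inr ⟨u, hu, hr⟩)
  · rintro (h | ⟨u, hu, hr⟩ | ⟨u, hu, hr⟩)
    · exact Or.inl (Or.inl h)
    · exact Or.inl (Or.inr ⟨u, hu, hr⟩)
    · exact Or.inr ⟨u, hu, hr⟩

/-- The "inner" recurrence for `rsharp`. -/
lemma mem_rsharp_succ_iff' {m : ℕ} {z w : X} :
    w ∈ rsharp R (m+1) z ↔ w ∈ rsharp R m z ∨ (∃ u, R z u ∧ w ∈ rsharp R m u) ∨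
      (∃ u, R u z ∧ w ∈ rsharp R m u) := by
  induction m generalizing z w with
  | zero =>
    simp only [mem_rsharp_succ_iff]
    constructor
    · rintro (h | ⟨u, hu, hr⟩ | ⟨u, hu, hr⟩)
      · exact Or.inl h
      · cases hu; exact Or.inr (Or.inl ⟨w, hr, rfl⟩)
      · cases hu; exact Or.inr (Or.inr ⟨w, hr, rfl⟩)
    · rintro (h | ⟨u, hr, hu⟩ | ⟨u, hr, hu⟩)
      · exact Or.inl h
      · cases hu; exact Or.inr (Or.inl ⟨z, rfl, hr⟩)
      · cases hu; exact Or.inr (Or.inr ⟨z, rfl, hr⟩)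
  | succ m ih =>
    constructor
    · intro h
      rcases (mem_rsharp_succ_iff R).1 h with h' | ⟨u, hu, hr⟩ | ⟨u, hu, hr⟩
      · rcases ih.1 h' with h'' | ⟨v, hv, hm⟩ | ⟨v, hv, hm⟩
        · exact Or.inl (rsharp_succ_subset R m z h'')
        · exact Or.inr (Or.inl ⟨v, hv, rsharp_succ_subset R m v hm⟩)
        · exact Or.inr (Or.inr ⟨v, hv, rsharp_succ_subset R m v hm⟩)
      · rcases ih.1 hu with h'' | ⟨v, hv, hm⟩ | ⟨v, hv, hm⟩
        · exact Or.inl (mem_rsharp_succ_of_r R h'' hr)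
        · exact Or.inr (Or.inl ⟨v, hv, mem_rsharp_succ_of_r R hm hr⟩)
        · exact Or.inr (Or.inr ⟨v, hv, mem_rsharp_succ_of_r R hm hr⟩)
      · rcases ih.1 hu with h'' | ⟨v, hv, hm⟩ | ⟨v, hv, hm⟩
        · exact Or.inl (mem_rsharp_succ_of_rrev R h'' hr)
        · exact Or.inr (Or.inl ⟨v, hv, mem_rsharp_succ_of_rrev R hm hr⟩)
        · exact Or.inr (Or.inr ⟨v, hv, mem_rsharp_succ_of_rrev R hm hr⟩)
    · rintro (h | ⟨u, hr, hu⟩ | ⟨u, hr, hu⟩)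
      · exact rsharp_succ_subset R _ z h
      · rcases (mem_rsharp_succ_iff R).1 hu with h'' | ⟨v, hv, hm⟩ | ⟨v, hv, hm⟩
        · exact rsharp_succ_subset R _ z (ih.2 (Or.inr (Or.inl ⟨u, hr, h''⟩)))
        · exact (mem_rsharp_succ_iff R).2 (Or.inr (Or.inl
            ⟨v, ih.2 (Or.inr (Or.inl ⟨u, hr, hv⟩)), hm⟩))
        · exact (mem_rsharp_succ_iff R).2 (Or.inr (Or.inr
            ⟨v, ih.2 (Or.inr (Or.inl ⟨u, hr, hv⟩)), hm⟩))
      · rcases (mem_rsharp_succ_iff R).1 hu with h'' | ⟨v, hv, hm⟩ | ⟨v, hv, hm⟩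
        · exact rsharp_succ_subset R _ z (ih.2 (Or.inr (Or.inr ⟨u, hr, h''⟩)))
        · exact (mem_rsharp_succ_iff R).2 (Or.inr (Or.inl
            ⟨v, ih.2 (Or.inr (Or.inr ⟨u, hr, hv⟩)), hm⟩))
        · exact (mem_rsharp_succ_iff R).2 (Or.inr (Or.inr
            ⟨v, ih.2 (Or.inr (Or.inr ⟨u, hr, hv⟩)), hm⟩))

variable (V : ℕ → Set X)

@[simp] lemma mem_tsat_neg {x : X} {φ : TForm} :
    x ∈ TSat R V (TForm.neg φ) ↔ x ∉ TSat R V φ := by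
  simp [TForm.neg, TSat]

@[simp] lemma mem_tsat_andf {x : X} {φ ψ : TForm} :
    x ∈ TSat R V (andf φ ψ) ↔ x ∈ TSat R V φ ∧ x ∈ TSat R V ψ := by
  simp [andf, TForm.neg, TSat]

@[simp] lemma mem_tsat_orf {x : X} {φ ψ : TForm} :
    x ∈ TSat R V (orf φ ψ) ↔ x ∈ TSat R V φ ∨ x ∈ TSat R V ψ := by
  simp [orf, TForm.neg, TSat]

@[simp] lemma mem_tsat_imp {x : X} {φ ψ : TForm} :
    x ∈ TSat R V (TForm.imp φ ψ) ↔ (x ∈ TSat R V φ → x ∈ TSat R V ψ) := by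
  simp [TSat]; tauto

@[simp] lemma mem_tsat_dia {x : X} {φ : TForm} :
    x ∈ TSat R V (dia φ) ↔ ∃ w, R x w ∧ w ∈ TSat R V φ := by
  simp [dia, TForm.neg, TSat]

@[simp] lemma mem_tsat_bdia {x : X} {φ : TForm} :
    x ∈ TSat R V (TForm.bdia φ) ↔ ∃ w, R w x ∧ w ∈ TSat R V φ := by
  simp [TSat]

@[simp] lemma mem_tsat_bigConj {x : X} {l : List TForm} :
    x ∈ TSat R V (bigConj l) ↔ ∀ φ ∈ l, x ∈ TSat R V φ := by
  induction l with
  | nil => simp [bigConj, TForm.top, TForm.neg, TSat]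
  | cons φ l ih => simp [bigConj, ih]

@[simp] lemma mem_tsat_bigDisj {x : X} {l : List TForm} :
    x ∈ TSat R V (bigDisj l) ↔ ∃ φ ∈ l, x ∈ TSat R V φ := by
  induction l with
  | nil => simp [bigDisj, TSat]
  | cons φ l ih => simp [bigDisj, ih]

lemma mem_tsat_tdelta {m : ℕ} {x : X} {φ : TForm} :
    x ∈ TSat R V (tdelta m φ) ↔ ∃ w ∈ rsharp R m x, w ∈ TSat R V φ := by
  induction m generalizing x with
  | zero => simp [tdelta, rsharp]
  | succ m ih =>
    simp only [tdelta, mem_tsat_orf, mem_tsat_dia, mem_tsat_bdia, ih]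
    constructor
    · rintro (⟨w, hw, h⟩ | ⟨u, hr, w, hw, h⟩ | ⟨u, hr, w, hw, h⟩)
      · exact ⟨w, (mem_rsharp_succ_iff' R).2 (Or.inl hw), h⟩
      · exact ⟨w, (mem_rsharp_succ_iff' R).2 (Or.inr (Or.inl ⟨u, hr, hw⟩)), h⟩
      · exact ⟨w, (mem_rsharp_succ_iff' R).2 (Or.inr (Or.inr ⟨u, hr, hw⟩)), h⟩
    · rintro ⟨w, hw, h⟩
      rcases (mem_rsharp_succ_iff' R).1 hw with h' | ⟨u, hr, hw'⟩ | ⟨u, hr, hw'⟩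
      · exact Or.inl ⟨w, h', h⟩
      · exact Or.inr (Or.inl ⟨u, hr, w, hw', h⟩)
      · exact Or.inr (Or.inr ⟨u, hr, w, hw', h⟩)

lemma mem_tsat_tnabla {m : ℕ} {x : X} {φ : TForm} :
    x ∈ TSat R V (tnabla m φ) ↔ ∀ w ∈ rsharp R m x, w ∈ TSat R V φ := by
  simp only [tnabla, mem_tsat_neg, mem_tsat_tdelta]
  push_neg
  simp

@[simp] lemma mem_tsat_var {x : X} {m : ℕ} :
    x ∈ TSat R V (TForm.var m) ↔ x ∈ V m := Iff.rfl

lemma mem_finPairs {n : ℕ} (p : Fin n × Fin n) : p ∈ finPairs n := by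
  simp [finPairs]

lemma forall_swap_eq_imp {α : Type*} {β γ : Sort*} {p : α → Prop} {q : β → γ → Prop}
    {f : β → γ → α} :
    (∀ x (a : β) (b : γ), q a b → f a b = x → p x) ↔ ∀ (a : β) (b : γ), q a b → p (f a b) := by
  constructor
  · intro h a b hq; exact h _ a b hq rfl
  · rintro h x a b hq rfl; exact h a b hq

lemma mem_tsat_jankov {Y : Type} (S : Y → Y → Prop) {n k : ℕ} (e : Fin n → Y)
    {x : X} :
    x ∈ TSat R V (jankov S k n e) ↔
      x ∈ V 0 ∧
      (∀ w ∈ rsharp R k x, ∃ i : Fin n, w ∈ V i.val) ∧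
      (∀ i j : Fin n, i ≠ j → ∀ w ∈ rsharp R k x, w ∈ V i.val → w ∉ V j.val) ∧
      (∀ i j : Fin n, S (e i) (e j) → ∀ w ∈ rsharp R (k-1) x,
        (w ∈ V i.val → ∃ u, R w u ∧ u ∈ V j.val) ∧
        (w ∈ V j.val → ∃ u, R u w ∧ u ∈ V i.val)) ∧
      (∀ i j : Fin n, ¬ S (e i) (e j) → ∀ w ∈ rsharp R (k-1) x,
        (w ∈ V i.val → ¬ ∃ u, R w u ∧ u ∈ V j.val) ∧
        (w ∈ V j.val → ¬ ∃ u, R u w ∧ u ∈ V i.val)) := by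
  simp only [jankov, mem_tsat_andf, mem_tsat_bigConj, List.mem_map, List.mem_filter,
    mem_tsat_tnabla, mem_tsat_bigDisj, mem_tsat_imp, mem_tsat_neg, mem_tsat_dia, mem_tsat_bdia,
    mem_tsat_var, decide_eq_true_eq, mem_finPairs, Prod.forall, forall_exists_index,
    List.mem_finRange, true_and, and_imp, exists_exists_eq_and, forall_eq',
    forall_apply_eq_imp_iff, forall_eq_apply_imp_iff, not_exists, not_and,
    forall_swap_eq_imp]
  tauto

end Aux

/-- `¬𝒥^k(𝔊,y)` fails to be valid at `x` in `𝔉` iff there is a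
`k`-t-morphism from `(𝔉,x)` to `(𝔊,y)`. -/
theorem statement3 {X Y : Type} [Nonempty X] [Nonempty Y]
    (R : X → X → Prop) (S : Y → Y → Prop) (hS : ImageFinite S)
    (x : X) (y : Y) (k : ℕ) (hk : 1 ≤ k)
    (n : ℕ) (hn : 0 < n) (e : Fin n → Y) (hinj : Function.Injective e)
    (hrange : Set.range e = rsharp S k y) (he0 : e ⟨0, hn⟩ = y) :
    ¬ ValidAt R x (TForm.neg (jankov S k n e)) ↔
      ∃ f : X → Option Y, IsKTMorphism R S f x y k := by
  classical
  have hk1 : k - 1 + 1 = k := Nat.succ_pred_eq_of_pos hk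
  have hkk : k - 1 ≤ k := Nat.sub_le k 1
  constructor
  · intro hval
    rw [ValidAt] at hval
    push_neg at hval
    obtain ⟨V, hV⟩ := hval
    have hx : x ∈ TSat R V (jankov S k n e) := by
      by_contra h
      exact hV ((mem_tsat_neg R V).2 h)
    rw [mem_tsat_jankov R V S e] at hx
    obtain ⟨h0, hcov, hdis, hpos, hneg⟩ := hx
    choose g hg using hcov
    set f : X → Option Y :=
      fun z => if h : z ∈ rsharp R k x then some (e (g z h)) else none with hf
    have funiq : ∀ z (hz : z ∈ rsharp R k x) (i : Fin n), z ∈ V i.val → f z = some (e i) := by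
      intro z hz i hi
      have hgi : g z hz = i := by
        by_contra hne
        exact hdis _ i hne z hz (hg z hz) hi
      simp only [hf]
      rw [dif_pos hz, hgi]
    have fchar : ∀ z z', f z = some z' →
        ∃ (_ : z ∈ rsharp R k x) (i : Fin n), z' = e i ∧ z ∈ V i.val := by
      intro z z' hfz
      by_cases hz : z ∈ rsharp R k x
      · refine ⟨hz, g z hz, ?_, hg z hz⟩
        simp only [hf] at hfz
        rw [dif_pos hz] at hfz
        exact (Option.some_inj.1 hfz).symm
      · simp only [hf] at hfz
        rw [dif_neg hz] at hfz
        exact absurd hfz (by simp)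
    have hL : ∀ m, m ≤ k - 1 → ∀ z ∈ rsharp R m x, ∀ i : Fin n,
        z ∈ V i.val → e i ∈ rsharp S m y := by
      intro m
      induction m with
      | zero =>
        intro _ z hz i hi
        have hzx : z = x := hz
        subst hzx
        have hie : i = ⟨0, hn⟩ := by
          by_contra hne
          exact hdis i ⟨0, hn⟩ hne z (self_mem_rsharp R k z) hi h0
        rw [hie]
        exact he0
      | succ m ih =>
        intro hm z hz i hi
        have hm' : m ≤ k - 1 := Nat.le_of_succ_le hm
        rcases (mem_rsharp_succ_iff R).1 hz with h' | ⟨u, hu, hr⟩ | ⟨u, hu, hr⟩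
        · exact rsharp_succ_subset S m y (ih hm' z h' i hi)
        · have huk : u ∈ rsharp R k x := rsharp_mono R (le_trans hm' hkk) x hu
          have hi' := hg u huk
          have hSi : S (e (g u huk)) (e i) := by
            by_contra hns
            exact (hneg (g u huk) i hns u (rsharp_mono R hm' x hu)).1 hi' ⟨z, hr, hi⟩
          exact mem_rsharp_succ_of_r S (ih hm' u hu (g u huk) hi') hSi
        · have huk : u ∈ rsharp R k x := rsharp_mono R (le_trans hm' hkk) x hu
          have hi' := hg u huk
          have hSi : S (e i) (e (g u huk)) := by
            by_contra hns
            exact (hneg i (g u huk) hns u (rsharp_mono R hm' x hu)).2 hi' ⟨z, hr, hi⟩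
          exact mem_rsharp_succ_of_rrev S (ih hm' u hu (g u huk) hi') hSi
    refine ⟨f, ?_, ?_, ?_⟩
    · intro z hz
      have : f z = some (e (g z hz)) := by
        simp only [hf]
        rw [dif_pos hz]
      simp [pdom, this]
    · have := funiq x (self_mem_rsharp R k x) ⟨0, hn⟩ h0
      rwa [he0] at this
    · intro z hz z' hfz
      obtain ⟨hzk, i, rfl, hi⟩ := fchar z z' hfz
      have hik : e i ∈ rsharp S (k-1) y := hL (k-1) le_rfl z hz i hi
      constructor
      · ext y'
        constructor
        · rintro ⟨w, hw, hfw⟩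
          obtain ⟨hwk, j, rfl, hj⟩ := fchar w _ hfw
          by_contra hns
          exact (hneg i j hns z hz).1 hi ⟨w, hw, hj⟩
        · intro hS'
          have hy' : y' ∈ rsharp S k y := by
            have := mem_rsharp_succ_of_r S hik hS'
            rwa [hk1] at this
          rw [← hrange] at hy'
          obtain ⟨j, rfl⟩ := hy'
          obtain ⟨u, hru, hu⟩ := (hpos i j hS' z hz).1 hi
          have huk : u ∈ rsharp R k x := by
            have := mem_rsharp_succ_of_r R hz hru
            rwa [hk1] at this
          exact ⟨u, hru, funiq u huk j hu⟩
      · ext y'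
        constructor
        · rintro ⟨w, hw, hfw⟩
          obtain ⟨hwk, j, rfl, hj⟩ := fchar w _ hfw
          by_contra hns
          exact (hneg j i hns z hz).2 hi ⟨w, hw, hj⟩
        · intro hS'
          have hy' : y' ∈ rsharp S k y := by
            have := mem_rsharp_succ_of_rrev S hik hS'
            rwa [hk1] at this
          rw [← hrange] at hy'
          obtain ⟨j, rfl⟩ := hy'
          obtain ⟨u, hru, hu⟩ := (hpos j i hS' z hz).2 hi
          have huk : u ∈ rsharp R k x := by
            have := mem_rsharp_succ_of_rrev R hz hru
            rwa [hk1] at this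
          exact ⟨u, hru, funiq u huk j hu⟩
  · rintro ⟨f, hdom, hfx, hmor⟩
    rw [ValidAt]
    push_neg
    set V : ℕ → Set X := fun m => {z | ∃ h : m < n, f z = some (e ⟨m, h⟩)} with hVdef
    have hVval : ∀ (z : X) (i : Fin n), z ∈ V i.val ↔ f z = some (e i) := by
      intro z i
      constructor
      · rintro ⟨h, hfz⟩
        rwa [Fin.eta] at hfz
      · intro hfz
        exact ⟨i.isLt, by rwa [Fin.eta]⟩
    have hM : ∀ m, m ≤ k → ∀ z ∈ rsharp R m x,
        ∃ y', f z = some y' ∧ y' ∈ rsharp S m y := by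
      intro m
      induction m with
      | zero =>
        intro _ z hz
        have hzx : z = x := hz
        subst hzx
        exact ⟨y, hfx, rfl⟩
      | succ m ih =>
        intro hm z hz
        have hm1 : m ≤ k - 1 := Nat.le_sub_one_of_lt hm
        have hmk : m ≤ k := Nat.le_of_succ_le hm
        have hzdom : (f z).isSome := hdom (rsharp_mono R hm x hz)
        obtain ⟨y', hy'⟩ := Option.isSome_iff_exists.1 hzdom
        rcases (mem_rsharp_succ_iff R).1 hz with h' | ⟨u, hu, hr⟩ | ⟨u, hu, hr⟩
        · obtain ⟨y'', h1, h2⟩ := ih hmk z h'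
          exact ⟨y'', h1, rsharp_succ_subset S m y h2⟩
        · obtain ⟨yu, hfu, hyu⟩ := ih hmk u hu
          have hum : u ∈ rsharp R (k-1) x := rsharp_mono R hm1 x hu
          have himg := (hmor u hum yu hfu).1
          have hmem : y' ∈ rsucc S yu := by
            rw [← himg]
            exact ⟨z, hr, hy'⟩
          exact ⟨y', hy', mem_rsharp_succ_of_r S hyu hmem⟩
        · obtain ⟨yu, hfu, hyu⟩ := ih hmk u hu
          have hum : u ∈ rsharp R (k-1) x := rsharp_mono R hm1 x hu
          have himg := (hmor u hum yu hfu).2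
          have hmem : y' ∈ rpred S yu := by
            rw [← himg]
            exact ⟨z, hr, hy'⟩
          exact ⟨y', hy', mem_rsharp_succ_of_rrev S hyu hmem⟩
    refine ⟨V, ?_⟩
    intro hcon
    have hx : x ∉ TSat R V (jankov S k n e) := (mem_tsat_neg R V).1 hcon
    apply hx
    refine (mem_tsat_jankov R V S e).2 ⟨?_, ?_, ?_, ?_, ?_⟩
    · exact (hVval x ⟨0, hn⟩).2 (by rw [he0]; exact hfx)
    · intro w hw
      obtain ⟨y', hfy, hy⟩ := hM k le_rfl w hw
      rw [← hrange] at hy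
      obtain ⟨i, rfl⟩ := hy
      exact ⟨i, (hVval w i).2 hfy⟩
    · intro i j hij w hw hi hj
      exact hij (hinj (Option.some_inj.1 (((hVval w i).1 hi).symm.trans ((hVval w j).1 hj))))
    · intro i j hS' w hw
      constructor
      · intro hi
        have hfw := (hVval w i).1 hi
        have himg := (hmor w hw _ hfw).1
        have hmem : e j ∈ pimg f (rsucc R w) := by
          rw [himg]
          exact hS'
        obtain ⟨u, hru, hfu⟩ := hmem
        exact ⟨u, hru, (hVval u j).2 hfu⟩
      · intro hj
        have hfw := (hVval w j).1 hj
        have himg := (hmor w hw _ hfw).2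
        have hmem : e i ∈ pimg f (rpred R w) := by
          rw [himg]
          exact hS'
        obtain ⟨u, hru, hfu⟩ := hmem
        exact ⟨u, hru, (hVval u i).2 hfu⟩
    · intro i j hS' w hw
      constructor
      · rintro hi ⟨u, hru, hu⟩
        apply hS'
        have hfw := (hVval w i).1 hi
        have himg := (hmor w hw _ hfw).1
        have hmem : e j ∈ pimg f (rsucc R w) := ⟨u, hru, (hVval u j).1 hu⟩
        rw [himg] at hmem
        exact hmem
      · rintro hj ⟨u, hru, hu⟩
        apply hS'
        have hfw := (hVval w j).1 hj
        have himg := (hmor w hw _ hfw).2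
        have hmem : e i ∈ pimg f (rpred R w) := ⟨u, hru, (hVval u i).1 hu⟩
        rw [himg] at hmem
        exact hmem
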